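/- Let A ∈ L(H)⁺ and S a closed subspace such that (A,S) is compatible. Then P_{A,S} is a projection with range S and nullspace A⁻¹(S^⊥) ⊖ (N(A) ∩ S) (the orthogonal complement of N(A) ∩ S inside A⁻¹(S^⊥)). -/

import Mathlib

/-!
`D` ranges in the closure of the range of `(PAP)*`, that is in `(ker PAP)ᗮ`; as `ker PAP`
contains `Sᗮ` and `N(A) ∩ S`, `D` maps into `S ∩ (N(A) ∩ S)ᗮ`. For `x ∈ S` the equation gives
`PAP (D x) = PA(I - P) x = 0`, so `D` vanishes on `S`. Hence `P + D` maps into `S` and fixes `S`: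
it is a projection with range `S`. The equation also says `PA(P + D) = PA`, so on the kernel
`PAx = 0`. Conversely, if `Ax ⊥ S` then `v = (P + D)x ∈ S` has `PAv = 0`, so `⟪Av, v⟫ = 0` and
positivity forces `Av = 0`; if moreover `x ⊥ N(A) ∩ S`, then `v` lies both in `N(A) ∩ S` and in
its orthogonal complement.
-/

open ContinuousLinearMap
open scoped InnerProductSpace

namespace ContinuousLinearMap

variable {H : Type*} [NormedAddCommGroup H] [InnerProductSpace ℂ H] [CompleteSpace H]

theorem IsPositive.apply_eq_zero_of_inner_self_eq_zero {A : H →L[ℂ] H} (hA : A.IsPositive)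
    {v : H} (hv : ⟪A v, v⟫_ℂ = 0) : A v = 0 := by
  obtain ⟨B, rfl⟩ :=
    CStarAlgebra.nonneg_iff_eq_star_mul_self.mp ((nonneg_iff_isPositive A).mpr hA)
  change ⟪adjoint B (B v), v⟫_ℂ = 0 at hv
  rw [adjoint_inner_left, inner_self_eq_zero] at hv
  change adjoint B (B v) = 0
  rw [hv, map_zero]

end ContinuousLinearMap

namespace Submodule

variable {𝕜 H : Type*} [RCLike 𝕜] [NormedAddCommGroup H] [InnerProductSpace 𝕜 H]
  (S : Submodule 𝕜 H) [S.HasOrthogonalProjection]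

theorem orthogonal_ker_conj_starProjection_le (A : H →L[𝕜] H) :
    (LinearMap.ker ((S.starProjection ∘L A ∘L S.starProjection : H →L[𝕜] H) : H →ₗ[𝕜] H))ᗮ ≤
      S ⊓ (LinearMap.ker (A : H →ₗ[𝕜] H) ⊓ S)ᗮ := by
  refine le_inf ((orthogonal_le fun x hx => ?_).trans S.orthogonal_orthogonal.le)
    (orthogonal_le fun x hx => ?_)
  · simp [(S.starProjection_apply_eq_zero_iff).mpr hx]
  · obtain ⟨hxA, hxS⟩ := mem_inf.mp hx
    simp_all [S.starProjection_eq_self_iff.mpr hxS]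

theorem starProjection_apply_mem_orthogonal_iff {N : Submodule 𝕜 H} (hN : N ≤ S) {x : H} :
    S.starProjection x ∈ Nᗮ ↔ x ∈ Nᗮ := by
  rw [← sub_sub_cancel x (S.starProjection x),
    Nᗮ.sub_mem_iff_left (orthogonal_le hN (S.sub_starProjection_mem_orthogonal x))]

end Submodule

section ReducedSolution

variable {𝕜 H : Type*} [RCLike 𝕜] [NormedAddCommGroup H] [InnerProductSpace 𝕜 H] [CompleteSpace H]

structure IsReducedSolution (A : H →L[𝕜] H) (S : Submodule 𝕜 H) [S.HasOrthogonalProjection]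
    (D : H →L[𝕜] H) : Prop where
  conj_comp_eq : (S.starProjection ∘L A ∘L S.starProjection) ∘L D =
    S.starProjection ∘L A ∘L (1 - S.starProjection)
  range_le : LinearMap.range (D : H →ₗ[𝕜] H) ≤
    (LinearMap.range ((adjoint (S.starProjection ∘L A ∘L S.starProjection) : H →L[𝕜] H) :
      H →ₗ[𝕜] H)).topologicalClosure

namespace IsReducedSolution

variable {A D : H →L[𝕜] H} {S : Submodule 𝕜 H} [S.HasOrthogonalProjection]

theorem apply_mem_orthogonal_ker (h : IsReducedSolution A S D) (x : H) :
    D x ∈ (LinearMap.ker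
      ((S.starProjection ∘L A ∘L S.starProjection : H →L[𝕜] H) : H →ₗ[𝕜] H))ᗮ := by
  rw [orthogonal_ker]
  exact h.range_le ⟨x, rfl⟩

theorem apply_mem (h : IsReducedSolution A S D) (x : H) : D x ∈ S :=
  (S.orthogonal_ker_conj_starProjection_le A (h.apply_mem_orthogonal_ker x)).1

theorem apply_mem_orthogonal_ker_inf (h : IsReducedSolution A S D) (x : H) :
    D x ∈ (LinearMap.ker (A : H →ₗ[𝕜] H) ⊓ S)ᗮ :=
  (S.orthogonal_ker_conj_starProjection_le A (h.apply_mem_orthogonal_ker x)).2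

theorem apply_eq_zero_of_mem (h : IsReducedSolution A S D) {x : H} (hx : x ∈ S) : D x = 0 := by
  have hker : D x ∈ LinearMap.ker
      ((S.starProjection ∘L A ∘L S.starProjection : H →L[𝕜] H) : H →ₗ[𝕜] H) := by
    have := congr($(h.conj_comp_eq) x)
    simp_all [S.starProjection_eq_self_iff.mpr hx]
  exact Submodule.disjoint_def.mp (Submodule.orthogonal_disjoint _) _ hker
    (h.apply_mem_orthogonal_ker x)

theorem isProj_starProjection_add (h : IsReducedSolution A S D) :
    LinearMap.IsProj S ((S.starProjection + D : H →L[𝕜] H) : H →ₗ[𝕜] H) where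
  map_mem x := S.add_mem (S.starProjection_apply_mem x) (h.apply_mem x)
  map_id x hx := by
    rw [coe_coe, add_apply, S.starProjection_eq_self_iff.mpr hx, h.apply_eq_zero_of_mem hx,
      add_zero]

theorem starProjection_comp_comp_starProjection_add (h : IsReducedSolution A S D) :
    S.starProjection ∘L A ∘L (S.starProjection + D) = S.starProjection ∘L A := by
  ext x
  have := congr($(h.conj_comp_eq) x)
  simp only [comp_apply, sub_apply, S.starProjection_eq_self_iff.mpr (h.apply_mem x)] at this
  simp only [comp_apply, add_apply, map_add, this, map_sub]
  abel

theorem ker_starProjection_add_le (h : IsReducedSolution A S D) :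
    LinearMap.ker ((S.starProjection + D : H →L[𝕜] H) : H →ₗ[𝕜] H) ≤
      Submodule.comap (A : H →ₗ[𝕜] H) Sᗮ ⊓ (LinearMap.ker (A : H →ₗ[𝕜] H) ⊓ S)ᗮ := by
  intro x hx
  replace hx : (S.starProjection + D) x = 0 := hx
  refine Submodule.mem_inf.mpr ⟨?_, ?_⟩
  · have := congr($(h.starProjection_comp_comp_starProjection_add) x)
    simp only [comp_apply, hx, map_zero] at this
    exact S.starProjection_apply_eq_zero_iff.mp this.symm
  · rw [add_apply] at hx
    rw [← S.starProjection_apply_mem_orthogonal_iff inf_le_right, eq_neg_of_add_eq_zero_left hx]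
    exact Submodule.neg_mem _ (h.apply_mem_orthogonal_ker_inf x)

end IsReducedSolution

end ReducedSolution

namespace IsReducedSolution

variable {H : Type*} [NormedAddCommGroup H] [InnerProductSpace ℂ H] [CompleteSpace H]
  {A D : H →L[ℂ] H} {S : Submodule ℂ H} [S.HasOrthogonalProjection]

theorem le_ker_starProjection_add (h : IsReducedSolution A S D) (hA : A.IsPositive) :
    Submodule.comap (A : H →ₗ[ℂ] H) Sᗮ ⊓ (LinearMap.ker (A : H →ₗ[ℂ] H) ⊓ S)ᗮ ≤
      LinearMap.ker ((S.starProjection + D : H →L[ℂ] H) : H →ₗ[ℂ] H) := by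
  rintro x ⟨hAx, hx⟩
  set v := (S.starProjection + D) x
  have hvS : v ∈ S := h.isProj_starProjection_add.map_mem x
  have hPAv : S.starProjection (A v) = 0 := by
    have := congr($(h.starProjection_comp_comp_starProjection_add) x)
    simp only [comp_apply] at this
    rw [this, S.starProjection_apply_eq_zero_iff]
    exact hAx
  have hAv : A v = 0 := by
    refine hA.apply_eq_zero_of_inner_self_eq_zero ?_
    rw [← S.starProjection_eq_self_iff.mpr hvS, ← S.inner_starProjection_left_eq_right,
      S.starProjection_eq_self_iff.mpr hvS, hPAv, inner_zero_left]
  have hvN : v ∈ (LinearMap.ker (A : H →ₗ[ℂ] H) ⊓ S)ᗮ :=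
    Submodule.add_mem _ ((S.starProjection_apply_mem_orthogonal_iff inf_le_right).mpr hx)
      (h.apply_mem_orthogonal_ker_inf x)
  exact Submodule.disjoint_def.mp (Submodule.orthogonal_disjoint _) v
    (Submodule.mem_inf.mpr ⟨hAv, hvS⟩) hvN

end IsReducedSolution

theorem stmt_9
    {H : Type*} [NormedAddCommGroup H] [InnerProductSpace ℂ H] [CompleteSpace H]
    (A : H →L[ℂ] H) (hA : A.IsPositive)
    (S : Submodule ℂ H) [CompleteSpace S]
    -- `Ps` is the orthogonal projection onto `S`, viewed as an operator on `H`.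
    (Ps : H →L[ℂ] H) (hPs : Ps = S.subtypeL ∘L S.orthogonalProjectionOnto)
    -- `D` is the reduced solution of the equation `(P A P) X = P A (I - P)`.
    (D : H →L[ℂ] H) (hD : (Ps ∘L A ∘L Ps) ∘L D = Ps ∘L A ∘L (1 - Ps))
    (hDran : LinearMap.range (D : H →ₗ[ℂ] H) ≤
      (LinearMap.range ((adjoint (Ps ∘L A ∘L Ps) : H →L[ℂ] H) : H →ₗ[ℂ] H)).topologicalClosure) :
    (Ps + D) ∘L (Ps + D) = Ps + D ∧
    LinearMap.range ((Ps + D : H →L[ℂ] H) : H →ₗ[ℂ] H) = S ∧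
    LinearMap.ker ((Ps + D : H →L[ℂ] H) : H →ₗ[ℂ] H) =
      Submodule.comap (A : H →ₗ[ℂ] H) Sᗮ ⊓ (LinearMap.ker (A : H →ₗ[ℂ] H) ⊓ S)ᗮ := by
  obtain rfl : Ps = S.starProjection := hPs
  have h : IsReducedSolution A S D := ⟨hD, hDran⟩
  have hproj := h.isProj_starProjection_add
  refine ⟨?_, hproj.range,
    le_antisymm h.ker_starProjection_add_le (h.le_ker_starProjection_add hA)⟩
  ext x
  exact hproj.map_id _ (hproj.map_mem x)
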